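/- Let D(t) ∈ ℂ[t] be non-square of even degree 2d and suppose the sequence (deg a_n) of degrees of partial quotients of √D is eventually periodic. Then there exist a positive rational number c and an eventually periodic sequence (r_n) of rational numbers such that deg q_n = c·n + r_n for all n, where q_n are the convergent denominators; moreover deg p_n = deg q_n + d. -/
import Mathlib


open Polynomial

/-- An abstract model of the field `ℂ((t⁻¹))` of formal Laurent series at `t = ∞`:
`ι` embeds the rational functions `ℂ(t)`, `v f` is the order of vanishing of `f` at
`t = ∞` (so `v p = -deg p` for a nonzero polynomial `p`), and `polyPart f` is the
polynomial part of `f` (the unique polynomial `g` with `f - g` vanishing at `∞`). -/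
structure LaurentAtInfModel (F : Type*) [Field F] where
  ι : RatFunc ℂ →+* F
  v : F → ℤ
  polyPart : F → ℂ[X]
  v_mul : ∀ f g : F, f ≠ 0 → g ≠ 0 → v (f * g) = v f + v g
  v_add : ∀ f g : F, f ≠ 0 → g ≠ 0 → f + g ≠ 0 → min (v f) (v g) ≤ v (f + g)
  v_poly : ∀ p : ℂ[X], p ≠ 0 → v (ι (algebraMap ℂ[X] (RatFunc ℂ) p)) = -(p.natDegree : ℤ)
  polyPart_spec : ∀ f : F,
      f - ι (algebraMap ℂ[X] (RatFunc ℂ) (polyPart f)) = 0 ∨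
        1 ≤ v (f - ι (algebraMap ℂ[X] (RatFunc ℂ) (polyPart f)))
  polyPart_unique : ∀ (f : F) (g : ℂ[X]),
      (f - ι (algebraMap ℂ[X] (RatFunc ℂ) g) = 0 ∨
        1 ≤ v (f - ι (algebraMap ℂ[X] (RatFunc ℂ) g))) → g = polyPart f

namespace LaurentAtInfModel

variable {F : Type*} [Field F] (M : LaurentAtInfModel F)

/-- The image of a polynomial in the model. -/
noncomputable def ofPoly (p : ℂ[X]) : F := M.ι (algebraMap ℂ[X] (RatFunc ℂ) p)

/-- The complete quotients (tails) `λ_n` of the continued fraction of `lam`: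
`λ₀ = lam`, `λ_{n+1} = 1 / (λ_n - a_n)`. -/
noncomputable def tail (lam : F) : ℕ → F
  | 0 => lam
  | n + 1 => (tail lam n - M.ofPoly (M.polyPart (tail lam n)))⁻¹

/-- The partial quotients `a_n` of the continued fraction of `lam`. -/
noncomputable def pq (lam : F) (n : ℕ) : ℂ[X] := M.polyPart (M.tail lam n)

/-- The convergent numerators `p_n`, computed formally from the partial quotients in
the standard way, with `(p₀, q₀) = (1, 0)`: `p_{n+1} = a_n p_n + p_{n-1}`. -/
noncomputable def num (lam : F) : ℕ → ℂ[X]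
  | 0 => 1
  | 1 => M.pq lam 0
  | n + 2 => M.pq lam (n + 1) * num lam (n + 1) + num lam n

/-- The convergent denominators `q_n`: `q_{n+1} = a_n q_n + q_{n-1}`. -/
noncomputable def den (lam : F) : ℕ → ℂ[X]
  | 0 => 0
  | 1 => 1
  | n + 2 => M.pq lam (n + 1) * den lam (n + 1) + den lam n

/-- `lam ∈ ℂ((t⁻¹))` is irrational: not a rational function of `t`. -/
def Irrational (lam : F) : Prop := ∀ r : RatFunc ℂ, lam ≠ M.ι r

/-! ### Auxiliary lemmas -/

lemma v_one' : M.v 1 = 0 := by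
  have h := M.v_mul 1 1 one_ne_zero one_ne_zero
  rw [one_mul] at h; omega

lemma v_inv' {x : F} (hx : x ≠ 0) : M.v x⁻¹ = -M.v x := by
  have h := M.v_mul x x⁻¹ hx (inv_ne_zero hx)
  rw [mul_inv_cancel₀ hx, M.v_one'] at h; omega

lemma v_neg' {x : F} (hx : x ≠ 0) : M.v (-x) = M.v x := by
  have h1 := M.v_mul (-x) (-x) (neg_ne_zero.2 hx) (neg_ne_zero.2 hx)
  have h2 := M.v_mul x x hx hx
  rw [neg_mul_neg] at h1; omega

lemma v_add_eq' {f g : F} (hf : f ≠ 0) (hg : g ≠ 0) (h : M.v f < M.v g) :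
    f + g ≠ 0 ∧ M.v (f + g) = M.v f := by
  have hne : f + g ≠ 0 := by
    intro h0
    have hg' : g = -f := by linear_combination h0
    rw [hg', M.v_neg' hf] at h
    omega
  refine ⟨hne, ?_⟩
  have h1 := M.v_add f g hf hg hne
  have h2 := M.v_add (f + g) (-g) hne (neg_ne_zero.2 hg) (by simpa using hf)
  rw [add_neg_cancel_right, M.v_neg' hg] at h2
  omega

lemma ofPoly_eq_zero_iff {p : ℂ[X]} : M.ofPoly p = 0 ↔ p = 0 := by
  constructor
  · intro h
    have h1 : algebraMap ℂ[X] (RatFunc ℂ) p = 0 := by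
      apply M.ι.injective
      rw [map_zero]
      exact h
    exact RatFunc.algebraMap_injective ℂ (by simpa using h1)
  · rintro rfl; simp [ofPoly]

lemma v_ofPoly {p : ℂ[X]} (hp : p ≠ 0) : M.v (M.ofPoly p) = -(p.natDegree : ℤ) :=
  M.v_poly p hp

/-- Key structural fact about the polynomial part when the tail is irrational. -/
lemma polyPart_prop {f : F} (hv : M.v f ≤ 0)
    (hε : f - M.ofPoly (M.polyPart f) ≠ 0) :
    M.polyPart f ≠ 0 ∧ ((M.polyPart f).natDegree : ℤ) = -M.v f := by
  have hspec := (M.polyPart_spec f).resolve_left hε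
  set a := M.polyPart f with ha_def
  have hεv : 1 ≤ M.v (f - M.ofPoly a) := hspec
  have hf : f ≠ 0 := by
    rintro rfl
    have ha : a ≠ 0 := by
      rintro h0
      rw [h0] at hε
      simp [ofPoly] at hε
    have hva := M.v_ofPoly ha
    have h0 : (0 : F) - M.ofPoly a = -(M.ofPoly a) := by ring
    rw [h0, M.v_neg' ((M.ofPoly_eq_zero_iff).not.2 ha)] at hεv
    omega
  have ha : a ≠ 0 := by
    rintro h0
    rw [h0] at hεv
    simp only [ofPoly, map_zero, sub_zero] at hεv
    omega
  refine ⟨ha, ?_⟩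
  have hoa : M.ofPoly a ≠ 0 := (M.ofPoly_eq_zero_iff).not.2 ha
  have hva : M.v (M.ofPoly a) = -(a.natDegree : ℤ) := M.v_ofPoly ha
  have hlt : M.v (M.ofPoly a) < M.v (f - M.ofPoly a) := by omega
  have key := M.v_add_eq' hoa hε hlt
  have heq : M.ofPoly a + (f - M.ofPoly a) = f := by ring
  rw [heq] at key
  omega

section Sqrt

variable {M}
variable {D : Polynomial ℂ} {d : ℕ} (hd : 0 < d) (hdeg : D.natDegree = 2 * d)
  (hnonsq : ¬∃ g : Polynomial ℂ, D = g ^ 2)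
  {w : F} (hw : w ^ 2 = M.ofPoly D) (hirr : M.Irrational w)

include hirr in
lemma tail_not_rat : ∀ n (r : RatFunc ℂ), M.tail w n ≠ M.ι r := by
  intro n
  induction n with
  | zero => exact hirr
  | succ n ih =>
    intro r h
    have hε : M.tail w n - M.ofPoly (M.polyPart (M.tail w n)) ≠ 0 := by
      intro h0
      exact ih (algebraMap ℂ[X] (RatFunc ℂ) (M.polyPart (M.tail w n)))
        (by rw [sub_eq_zero] at h0; exact h0)
    have htail : M.tail w (n + 1)
        = (M.tail w n - M.ofPoly (M.polyPart (M.tail w n)))⁻¹ := rfl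
    have hne : M.tail w (n + 1) ≠ 0 := by rw [htail]; exact inv_ne_zero hε
    have hr0 : r ≠ 0 := by rintro rfl; rw [map_zero] at h; exact hne h
    apply ih (algebraMap ℂ[X] (RatFunc ℂ) (M.polyPart (M.tail w n)) + r⁻¹)
    rw [map_add, map_inv₀]
    have h2 : M.tail w n - M.ofPoly (M.polyPart (M.tail w n)) = (M.ι r)⁻¹ := by
      rw [← h, htail, inv_inv]
    rw [← h2]
    show M.tail w n = M.ofPoly (M.polyPart (M.tail w n))
          + (M.tail w n - M.ofPoly (M.polyPart (M.tail w n)))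
    ring

include hirr in
lemma tail_ne_zero (n : ℕ) : M.tail w n ≠ 0 := fun h =>
  tail_not_rat hirr n 0 (by simpa using h)

include hirr in
lemma eps_ne_zero (n : ℕ) : M.tail w n - M.ofPoly (M.pq w n) ≠ 0 := by
  intro h
  exact tail_not_rat hirr n (algebraMap ℂ[X] (RatFunc ℂ) (M.pq w n))
    (by rw [sub_eq_zero] at h; exact h)

include hd hdeg hnonsq hw hirr in
lemma v_w : M.v w = -(d : ℤ) := by
  have hD : D ≠ 0 := by rintro rfl; exact hnonsq ⟨0, by simp⟩
  have hw0 : w ≠ 0 := tail_ne_zero hirr 0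
  have h1 := M.v_mul w w hw0 hw0
  have h2 : M.v (M.ofPoly D) = -(D.natDegree : ℤ) := M.v_ofPoly hD
  rw [← pow_two, hw, h2, hdeg] at h1
  omega

include hd hdeg hnonsq hw hirr in
lemma v_tail_le (n : ℕ) : M.v (M.tail w n) ≤ -1 := by
  induction n with
  | zero =>
    have := v_w hd hdeg hnonsq hw hirr
    simp only [tail]
    omega
  | succ n ih =>
    have hε := eps_ne_zero hirr n
    have hspec : 1 ≤ M.v (M.tail w n - M.ofPoly (M.pq w n)) :=
      (M.polyPart_spec (M.tail w n)).resolve_left hε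
    have htail : M.tail w (n + 1)
        = (M.tail w n - M.ofPoly (M.pq w n))⁻¹ := rfl
    rw [htail, M.v_inv' hε]
    omega

include hd hdeg hnonsq hw hirr in
lemma pq_ne_zero_and_deg (n : ℕ) :
    M.pq w n ≠ 0 ∧ ((M.pq w n).natDegree : ℤ) = -M.v (M.tail w n) :=
  M.polyPart_prop (by have := v_tail_le hd hdeg hnonsq hw hirr n; omega)
    (eps_ne_zero hirr n)

include hd hdeg hnonsq hw hirr in
lemma pq_deg_pos (n : ℕ) : 1 ≤ (M.pq w n).natDegree := by
  have h1 := (pq_ne_zero_and_deg hd hdeg hnonsq hw hirr n).2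
  have h2 := v_tail_le hd hdeg hnonsq hw hirr n
  omega

include hd hdeg hnonsq hw hirr in
lemma pq_deg_zero : (M.pq w 0).natDegree = d := by
  have h1 := (pq_ne_zero_and_deg hd hdeg hnonsq hw hirr 0).2
  have h2 := v_w hd hdeg hnonsq hw hirr
  have h0 : M.tail w 0 = w := rfl
  rw [h0] at h1
  omega

end Sqrt

end LaurentAtInfModel

/-- Let `D(t) ∈ ℂ[t]` be non-square of even degree `2d` and suppose the sequence
`(deg a_n)` of degrees of partial quotients of `√D` is eventually periodic.  Then there
exist a positive rational number `c` and an eventually periodic sequence `(r_n)` of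
rational numbers such that `deg q_n = c·n + r_n` for all `n`, where `q_n` are the
convergent denominators; moreover `deg p_n = deg q_n + d` (for `n ≥ 1`). -/
theorem statement18 {F : Type*} [Field F] (M : LaurentAtInfModel F)
    (D : Polynomial ℂ) (d : ℕ) (hd : 0 < d) (hdeg : D.natDegree = 2 * d)
    (hnonsq : ¬∃ g : Polynomial ℂ, D = g ^ 2)
    (w : F) (hw : w ^ 2 = M.ofPoly D) (hirr : M.Irrational w)
    (hper : ∃ N T : ℕ, 0 < T ∧ ∀ n : ℕ, N ≤ n →
      (M.pq w (n + T)).natDegree = (M.pq w n).natDegree) :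
    (∃ c : ℚ, 0 < c ∧ ∃ r : ℕ → ℚ,
      (∃ N T : ℕ, 0 < T ∧ ∀ n : ℕ, N ≤ n → r (n + T) = r n) ∧
      ∀ n : ℕ, ((M.den w n).natDegree : ℚ) = c * n + r n) ∧
    ∀ n : ℕ, 1 ≤ n → (M.num w n).natDegree = (M.den w n).natDegree + d := by
  classical
  set a : ℕ → ℕ := fun n => (M.pq w n).natDegree with ha_def
  have hpq0 : ∀ n, M.pq w n ≠ 0 :=
    fun n => (M.pq_ne_zero_and_deg hd hdeg hnonsq hw hirr n).1
  have hpos : ∀ n, 1 ≤ a n := M.pq_deg_pos hd hdeg hnonsq hw hirr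
  have ha0 : a 0 = d := M.pq_deg_zero hd hdeg hnonsq hw hirr
  -- degree of a partial quotient as `degree`
  have hdegpq : ∀ n, (M.pq w n).degree = (a n : ℕ) := fun n =>
    Polynomial.degree_eq_natDegree (hpq0 n)
  -- degree recursions for num and den
  have hden : ∀ n, M.den w (n + 1) ≠ 0 ∧
      (M.den w (n + 1)).natDegree = ∑ k ∈ Finset.range n, a (k + 1) ∧
      (M.den w n).degree < (M.den w (n + 1)).degree := by
    intro n
    induction n with
    | zero =>
      refine ⟨one_ne_zero, by simp [LaurentAtInfModel.den], ?_⟩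
      show (M.den w 0).degree < (M.den w 1).degree
      have h0 : M.den w 0 = 0 := rfl
      have h1 : M.den w 1 = 1 := rfl
      rw [h0, h1]
      simp
    | succ n ih =>
      obtain ⟨hne, hdeg', hlt⟩ := ih
      have hrec : M.den w (n + 2)
          = M.pq w (n + 1) * M.den w (n + 1) + M.den w n := rfl
      have hmul : (M.pq w (n + 1) * M.den w (n + 1)).degree
          = (M.pq w (n + 1)).degree + (M.den w (n + 1)).degree :=
        Polynomial.degree_mul
      have hlt2 : (M.den w n).degree < (M.pq w (n + 1) * M.den w (n + 1)).degree := by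
        refine hlt.trans_le ?_
        rw [hmul, hdegpq (n + 1), Polynomial.degree_eq_natDegree hne, ← Nat.cast_add]
        exact_mod_cast Nat.le_add_left _ _
      have hdadd : (M.den w (n + 2)).degree
          = (M.pq w (n + 1) * M.den w (n + 1)).degree := by
        rw [hrec]
        exact Polynomial.degree_add_eq_left_of_degree_lt hlt2
      have hne2 : M.den w (n + 2) ≠ 0 := by
        intro h0
        rw [h0, Polynomial.degree_zero, hmul, hdegpq (n + 1),
          Polynomial.degree_eq_natDegree hne, ← Nat.cast_add] at hdadd
        exact (WithBot.bot_ne_coe) hdadd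
      have hnat : (M.den w (n + 2)).natDegree
          = a (n + 1) + (M.den w (n + 1)).natDegree := by
        have h2 := Polynomial.natDegree_mul (hpq0 (n + 1)) hne
        have h3 : (M.den w (n + 2)).natDegree
            = (M.pq w (n + 1) * M.den w (n + 1)).natDegree :=
          Polynomial.natDegree_eq_of_degree_eq hdadd
        rw [h3, h2]
      refine ⟨hne2, ?_, ?_⟩
      · rw [hnat, hdeg', Finset.sum_range_succ]
        omega
      · rw [Polynomial.degree_eq_natDegree hne, Polynomial.degree_eq_natDegree hne2,
          Nat.cast_lt, hnat]
        have := hpos (n + 1)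
        omega
  have hnum : ∀ n, M.num w (n + 1) ≠ 0 ∧
      (M.num w (n + 1)).natDegree = d + ∑ k ∈ Finset.range n, a (k + 1) ∧
      (M.num w n).degree < (M.num w (n + 1)).degree := by
    intro n
    induction n with
    | zero =>
      have h1 : M.num w 1 = M.pq w 0 := rfl
      have h0 : M.num w 0 = 1 := rfl
      refine ⟨by rw [h1]; exact hpq0 0, by rw [h1]; simpa using ha0, ?_⟩
      rw [h0, h1, Polynomial.degree_one, hdegpq 0, ha0]
      exact_mod_cast hd
    | succ n ih =>
      obtain ⟨hne, hdeg', hlt⟩ := ih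
      have hrec : M.num w (n + 2)
          = M.pq w (n + 1) * M.num w (n + 1) + M.num w n := rfl
      have hmul : (M.pq w (n + 1) * M.num w (n + 1)).degree
          = (M.pq w (n + 1)).degree + (M.num w (n + 1)).degree :=
        Polynomial.degree_mul
      have hlt2 : (M.num w n).degree < (M.pq w (n + 1) * M.num w (n + 1)).degree := by
        refine hlt.trans_le ?_
        rw [hmul, hdegpq (n + 1), Polynomial.degree_eq_natDegree hne, ← Nat.cast_add]
        exact_mod_cast Nat.le_add_left _ _
      have hdadd : (M.num w (n + 2)).degree
          = (M.pq w (n + 1) * M.num w (n + 1)).degree := by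
        rw [hrec]
        exact Polynomial.degree_add_eq_left_of_degree_lt hlt2
      have hne2 : M.num w (n + 2) ≠ 0 := by
        intro h0
        rw [h0, Polynomial.degree_zero, hmul, hdegpq (n + 1),
          Polynomial.degree_eq_natDegree hne, ← Nat.cast_add] at hdadd
        exact (WithBot.bot_ne_coe) hdadd
      have hnat : (M.num w (n + 2)).natDegree
          = a (n + 1) + (M.num w (n + 1)).natDegree := by
        have h2 := Polynomial.natDegree_mul (hpq0 (n + 1)) hne
        have h3 : (M.num w (n + 2)).natDegree
            = (M.pq w (n + 1) * M.num w (n + 1)).natDegree :=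
          Polynomial.natDegree_eq_of_degree_eq hdadd
        rw [h3, h2]
      refine ⟨hne2, ?_, ?_⟩
      · rw [hnat, hdeg', Finset.sum_range_succ]
        omega
      · rw [Polynomial.degree_eq_natDegree hne, Polynomial.degree_eq_natDegree hne2,
          Nat.cast_lt, hnat]
        have := hpos (n + 1)
        omega
  constructor
  · -- the linear growth statement
    obtain ⟨N, T, hT, hperiodic⟩ := hper
    set b : ℕ → ℕ := fun n => a (n + 1) with hb_def
    have hbper : ∀ n, N ≤ n → b (n + T) = b n := by
      intro n hn
      show a (n + T + 1) = a (n + 1)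
      have : n + T + 1 = (n + 1) + T := by omega
      rw [this]
      exact hperiodic (n + 1) (by omega)
    set A : ℕ := ∑ k ∈ Finset.Ico N (N + T), b k with hA_def
    -- window sums are constant
    have hwindow : ∀ m, N ≤ m → ∑ k ∈ Finset.Ico m (m + T), b k = A := by
      intro m hm
      induction m, hm using Nat.le_induction with
      | base => rfl
      | succ m hm ih =>
        have e1 : ∑ k ∈ Finset.Ico m (m + T + 1), b k
            = (∑ k ∈ Finset.Ico m (m + T), b k) + b (m + T) :=
          Finset.sum_Ico_succ_top (by omega) _
        have e2 : ∑ k ∈ Finset.Ico m (m + T + 1), b k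
            = b m + ∑ k ∈ Finset.Ico (m + 1) (m + T + 1), b k :=
          Finset.sum_eq_sum_Ico_succ_bot (by omega) _
        have e3 : b (m + T) = b m := hbper m hm
        have e4 : m + 1 + T = m + T + 1 := by omega
        rw [e4]
        omega
    have hApos : T ≤ A := by
      calc T = ∑ _k ∈ Finset.Ico N (N + T), 1 := by simp
      _ ≤ A := Finset.sum_le_sum (fun k _ => hpos (k + 1))
    have hc : (0 : ℚ) < (A : ℚ) / T :=
      div_pos (by exact_mod_cast lt_of_lt_of_le hT hApos) (by exact_mod_cast hT)
    refine ⟨(A : ℚ) / T, hc, fun n => ((M.den w n).natDegree : ℚ) - (A : ℚ) / T * n, ?_, ?_⟩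
    · refine ⟨N + 1, T, hT, ?_⟩
      intro n hn
      obtain ⟨m, rfl⟩ : ∃ m, n = m + 1 := ⟨n - 1, by omega⟩
      have hmN : N ≤ m := by omega
      have hq1 : (M.den w (m + 1)).natDegree = ∑ k ∈ Finset.range m, b k := (hden m).2.1
      have hq2 : (M.den w (m + 1 + T)).natDegree = ∑ k ∈ Finset.range (m + T), b k := by
        have : m + 1 + T = (m + T) + 1 := by omega
        rw [this]
        exact (hden (m + T)).2.1
      have hsplit : ∑ k ∈ Finset.range (m + T), b k
          = (∑ k ∈ Finset.range m, b k) + ∑ k ∈ Finset.Ico m (m + T), b k :=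
        (Finset.sum_range_add_sum_Ico _ (by omega)).symm
      have hkey : (M.den w (m + 1 + T)).natDegree = (M.den w (m + 1)).natDegree + A := by
        rw [hq2, hsplit, hwindow m hmN, hq1]
      have hcT : (A : ℚ) / T * T = A := by
        field_simp
      have : ((M.den w (m + 1 + T)).natDegree : ℚ)
          = ((M.den w (m + 1)).natDegree : ℚ) + A := by exact_mod_cast hkey
      push_cast
      push_cast at this
      nlinarith [this, hcT]
    · intro n
      ring
  · -- deg p_n = deg q_n + d
    intro n hn
    obtain ⟨m, rfl⟩ : ∃ m, n = m + 1 := ⟨n - 1, by omega⟩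
    rw [(hnum m).2.1, (hden m).2.1]
    omega
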